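/- arXiv:2605.29947 — 6 statements merged into one kernel-verified Lean document; each statement's English description precedes it below -/
import Mathlib

section
/- Let (M_n, u_{m,n}) be an inverse system of A-modules indexed by ℕ, and let M = lim_n M_n be its inverse limit, realized as the submodule {(x_n) ∈ ∏_n M_n : u_{m,n}(x_n) = x_m for all m ≤ n} with projection maps u_m : M → M_m. Then the system (M_n) satisfies the ARML condition if and only if there exists r ∈ ℕ such that for every m ∈ ℕ one has im(u_m : M → M_m) = im(u_{m,m+r} : M_{m+r} → M_m). -/
theorem arml_key
    (A : Type*) [CommRing A]
    (M : ℕ → Type*) [∀ n, AddCommGroup (M n)] [∀ n, Module A (M n)]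
    (u : ∀ m n : ℕ, m ≤ n → (M n →ₗ[A] M m))
    (hu_id : ∀ n, u n n le_rfl = LinearMap.id)
    (hu_comp : ∀ k m n (hkm : k ≤ m) (hmn : m ≤ n),
      (u k m hkm).comp (u m n hmn) = u k n (hkm.trans hmn))
    (r : ℕ)
    (hr : ∀ m n (h : m + r ≤ n),
        LinearMap.range (u m n ((Nat.le_add_right m r).trans h))
          = LinearMap.range (u m (m + r) (Nat.le_add_right m r)))
    (m0 : ℕ) (y0 : M m0)
    (hy0 : y0 ∈ LinearMap.range (u m0 (m0 + r) (Nat.le_add_right m0 r))) :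
    ∃ x : ∀ n, M n, (∀ m n (h : m ≤ n), u m n h (x n) = x m) ∧ x m0 = y0 := by
  have cap : ∀ k m n (hkm : k ≤ m) (hmn : m ≤ n) (h : k ≤ n) (x : M n),
      u k m hkm (u m n hmn x) = u k n h x := by
    intro k m n hkm hmn h x
    exact LinearMap.congr_fun (hu_comp k m n hkm hmn) x
  -- one-step surjectivity onto stable images
  have step : ∀ m (y : M m), y ∈ LinearMap.range (u m (m + r) (Nat.le_add_right m r)) →
      ∃ z : M (m + 1), z ∈ LinearMap.range (u (m + 1) (m + 1 + r) (Nat.le_add_right _ r)) ∧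
        u m (m + 1) (Nat.le_succ m) z = y := by
    intro m y hy
    have h1 : y ∈ LinearMap.range (u m (m + 1 + r)
        ((Nat.le_add_right m r).trans (by omega))) := by
      rw [hr m (m + 1 + r) (by omega)]; exact hy
    obtain ⟨w, hw⟩ := h1
    refine ⟨u (m + 1) (m + 1 + r) (Nat.le_add_right _ r) w, ⟨w, rfl⟩, ?_⟩
    rw [cap m (m + 1) (m + 1 + r) (Nat.le_succ m) (Nat.le_add_right _ r) (by omega) w, hw]
  classical
  let g : (k : ℕ) → {z : M (m0 + k) //
      z ∈ LinearMap.range (u (m0 + k) (m0 + k + r) (Nat.le_add_right _ r))} :=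
    fun k => Nat.rec ⟨y0, hy0⟩
      (fun k ih => ⟨(step (m0 + k) ih.1 ih.2).choose,
        (step (m0 + k) ih.1 ih.2).choose_spec.1⟩) k
  have hgsucc : ∀ k, u (m0 + k) (m0 + k + 1) (Nat.le_succ _) (g (k + 1)).1 = (g k).1 :=
    fun k => (step (m0 + k) (g k).1 (g k).2).choose_spec.2
  have hchain : ∀ j k (h : j ≤ k),
      u (m0 + j) (m0 + k) (by omega) (g k).1 = (g j).1 := by
    intro j k h
    induction k, h using Nat.le_induction with
    | base =>
      exact LinearMap.congr_fun (hu_id (m0 + j)) (g j).1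
    | succ k hjk ih =>
      have h1 : u (m0 + k) (m0 + (k + 1)) (Nat.le_succ _) (g (k + 1)).1 = (g k).1 :=
        hgsucc k
      rw [← cap (m0 + j) (m0 + k) (m0 + (k + 1)) (by omega) (Nat.le_succ _) (by omega),
        h1, ih]
  refine ⟨fun n => u n (m0 + n) (Nat.le_add_left n m0) (g n).1, ?_, ?_⟩
  · intro m n h
    rw [cap m n (m0 + n) h (Nat.le_add_left n m0) (by omega),
      ← cap m (m0 + m) (m0 + n) (Nat.le_add_left m m0) (by omega) (by omega),
      hchain m n h]
  · exact hchain 0 m0 (Nat.zero_le m0)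

/-- Lemma: an inverse system `(M_n, u_{m,n})` of `A`-modules indexed by `ℕ` satisfies the
Artin–Rees–Mittag–Leffler condition if and only if there is an `r : ℕ` such that for every `m`
the image of the projection `u_m : lim_n M_n → M_m` from the inverse limit (realized as the
submodule of compatible sequences in the product) equals the image of `u_{m,m+r}`. -/
theorem arml_iff_image_of_limit_eq_image_of_shift
    (A : Type*) [CommRing A]
    (M : ℕ → Type*) [∀ n, AddCommGroup (M n)] [∀ n, Module A (M n)]
    (u : ∀ m n : ℕ, m ≤ n → (M n →ₗ[A] M m))
    (hu_id : ∀ n, u n n le_rfl = LinearMap.id)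
    (hu_comp : ∀ k m n (hkm : k ≤ m) (hmn : m ≤ n),
      (u k m hkm).comp (u m n hmn) = u k n (hkm.trans hmn))
    (L : Submodule A (∀ n, M n))
    (hL : ∀ x : ∀ n, M n, x ∈ L ↔ ∀ m n (h : m ≤ n), u m n h (x n) = x m) :
    (∃ r : ℕ, ∀ m n (h : m + r ≤ n),
        LinearMap.range (u m n ((Nat.le_add_right m r).trans h))
          = LinearMap.range (u m (m + r) (Nat.le_add_right m r)))
    ↔ (∃ r : ℕ, ∀ m : ℕ,
        LinearMap.range ((LinearMap.proj m).comp L.subtype)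
          = LinearMap.range (u m (m + r) (Nat.le_add_right m r))) := by
  have cap : ∀ k m n (hkm : k ≤ m) (hmn : m ≤ n) (h : k ≤ n) (x : M n),
      u k m hkm (u m n hmn x) = u k n h x := by
    intro k m n hkm hmn h x
    exact LinearMap.congr_fun (hu_comp k m n hkm hmn) x
  constructor
  · rintro ⟨r, hr⟩
    refine ⟨r, fun m => le_antisymm ?_ ?_⟩
    · rintro _ ⟨⟨x, hx⟩, rfl⟩
      exact ⟨x (m + r), ((hL x).1 hx m (m + r) (Nat.le_add_right m r))⟩
    · rintro y hy
      obtain ⟨x, hxc, hxm⟩ := arml_key A M u hu_id hu_comp r hr m y hy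
      exact ⟨⟨x, (hL x).2 hxc⟩, hxm⟩
  · rintro ⟨r, hr⟩
    refine ⟨r, fun m n h => le_antisymm ?_ ?_⟩
    · rintro _ ⟨w, rfl⟩
      exact ⟨u (m + r) n h w,
        cap m (m + r) n (Nat.le_add_right m r) h ((Nat.le_add_right m r).trans h) w⟩
    · intro y hy
      rw [← hr m] at hy
      obtain ⟨⟨x, hx⟩, rfl⟩ := hy
      exact ⟨x n, (hL x).1 hx m n ((Nat.le_add_right m r).trans h)⟩
end

section
/- Let 0 → M'_• → M_• → M''_• → 0 be a short exact sequence of inverse systems of A-modules indexed by ℕ. If both systems (M'_n) and (M''_n) satisfy the ARML condition, then so does the system (M_n). -/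
/-- Given a short exact sequence `0 → M'_• → M_• → M''_• → 0` of inverse systems of
`A`-modules indexed by `ℕ`, if both the subsystem `(M'_n)` and the quotient system `(M''_n)` satisfy the
Artin–Rees–Mittag–Leffler condition, then so does the middle system `(M_n)`. -/
theorem arml_of_ses_sub_and_quotient
    (A : Type*) [CommRing A]
    (M' M M'' : ℕ → Type*)
    [∀ n, AddCommGroup (M' n)] [∀ n, Module A (M' n)]
    [∀ n, AddCommGroup (M n)] [∀ n, Module A (M n)]
    [∀ n, AddCommGroup (M'' n)] [∀ n, Module A (M'' n)]
    (u' : ∀ m n : ℕ, m ≤ n → (M' n →ₗ[A] M' m))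
    (u : ∀ m n : ℕ, m ≤ n → (M n →ₗ[A] M m))
    (u'' : ∀ m n : ℕ, m ≤ n → (M'' n →ₗ[A] M'' m))
    (hu'_id : ∀ n, u' n n le_rfl = LinearMap.id)
    (hu'_comp : ∀ k m n (hkm : k ≤ m) (hmn : m ≤ n),
      (u' k m hkm).comp (u' m n hmn) = u' k n (hkm.trans hmn))
    (hu_id : ∀ n, u n n le_rfl = LinearMap.id)
    (hu_comp : ∀ k m n (hkm : k ≤ m) (hmn : m ≤ n),
      (u k m hkm).comp (u m n hmn) = u k n (hkm.trans hmn))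
    (hu''_id : ∀ n, u'' n n le_rfl = LinearMap.id)
    (hu''_comp : ∀ k m n (hkm : k ≤ m) (hmn : m ≤ n),
      (u'' k m hkm).comp (u'' m n hmn) = u'' k n (hkm.trans hmn))
    (ι : ∀ n, M' n →ₗ[A] M n) (p : ∀ n, M n →ₗ[A] M'' n)
    (hι : ∀ m n (h : m ≤ n), (u m n h).comp (ι n) = (ι m).comp (u' m n h))
    (hp : ∀ m n (h : m ≤ n), (u'' m n h).comp (p n) = (p m).comp (u m n h))
    (hinj : ∀ n, Function.Injective (ι n))
    (hexact : ∀ n, LinearMap.range (ι n) = LinearMap.ker (p n))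
    (hsurj : ∀ n, Function.Surjective (p n))
    (hARML' : ∃ r : ℕ, ∀ m n (h : m + r ≤ n),
      LinearMap.range (u' m n ((Nat.le_add_right m r).trans h))
        = LinearMap.range (u' m (m + r) (Nat.le_add_right m r)))
    (hARML'' : ∃ r : ℕ, ∀ m n (h : m + r ≤ n),
      LinearMap.range (u'' m n ((Nat.le_add_right m r).trans h))
        = LinearMap.range (u'' m (m + r) (Nat.le_add_right m r))) :
    ∃ r : ℕ, ∀ m n (h : m + r ≤ n),
      LinearMap.range (u m n ((Nat.le_add_right m r).trans h))
        = LinearMap.range (u m (m + r) (Nat.le_add_right m r)) := by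
  obtain ⟨r', h'⟩ := hARML'
  obtain ⟨r'', h''⟩ := hARML''
  refine ⟨r' + r'', fun m n h => ?_⟩
  have hmr' : m ≤ m + r' := Nat.le_add_right m r'
  have hr'R : m + r' ≤ m + (r' + r'') := by omega
  have hRn : m + (r' + r'') ≤ n := h
  have hmn : m ≤ n := le_trans (Nat.le_add_right _ _) h
  have hr'n : m + r' ≤ n := by omega
  apply le_antisymm
  · rintro _ ⟨x, rfl⟩
    refine ⟨u (m + (r' + r'')) n hRn x, ?_⟩
    exact LinearMap.congr_fun (hu_comp m (m + (r' + r'')) n (Nat.le_add_right _ _) hRn) x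
  · rintro _ ⟨y, rfl⟩
    -- quotient step
    have hq : (u'' (m + r') (m + (r' + r'')) hr'R) (p (m + (r' + r'')) y)
        ∈ LinearMap.range (u'' (m + r') n hr'n) := by
      have e1 := h'' (m + r') (m + (r' + r'')) (by omega)
      have e2 := h'' (m + r') n (by omega)
      have : LinearMap.range (u'' (m + r') (m + (r' + r'')) hr'R)
          = LinearMap.range (u'' (m + r') n hr'n) := e1.trans e2.symm
      rw [← this]; exact ⟨_, rfl⟩
    obtain ⟨z'', hz''⟩ := hq
    obtain ⟨z, rfl⟩ := hsurj n z''
    -- the difference lies in the subsystem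
    have hdker : p (m + r') (u (m + r') (m + (r' + r'')) hr'R y - u (m + r') n hr'n z) = 0 := by
      have c1 := LinearMap.congr_fun (hp (m + r') (m + (r' + r'')) hr'R) y
      have c2 := LinearMap.congr_fun (hp (m + r') n hr'n) z
      simp only [LinearMap.comp_apply] at c1 c2
      rw [map_sub, ← c1, ← c2, hz'']
      simp
    have hdmem : u (m + r') (m + (r' + r'')) hr'R y - u (m + r') n hr'n z
        ∈ LinearMap.range (ι (m + r')) := by
      rw [hexact]; exact hdker
    obtain ⟨w', hw'⟩ := hdmem
    -- sub step
    have hsub : u' m (m + r') hmr' w' ∈ LinearMap.range (u' m n hmn) := by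
      have e := h' m n hr'n
      have : LinearMap.range (u' m (m + r') hmr')
          = LinearMap.range (u' m n (hmn)) := by
        rw [e]
      rw [← this]; exact ⟨_, rfl⟩
    obtain ⟨w, hw⟩ := hsub
    refine ⟨z + ι n w, ?_⟩
    have c3 := LinearMap.congr_fun (hι m n hmn) w
    have c4 := LinearMap.congr_fun (hu_comp m (m + r') (m + (r' + r'')) hmr' hr'R) y
    have c5 := LinearMap.congr_fun (hu_comp m (m + r') n hmr' hr'n) z
    have c6 := LinearMap.congr_fun (hι m (m + r') hmr') w'
    simp only [LinearMap.comp_apply] at c3 c4 c5 c6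
    rw [map_add, c3, hw]
    calc u m n hmn z + ι m (u' m (m + r') hmr' w')
        = u m n hmn z + u m (m + r') hmr' (ι (m + r') w') := by rw [c6]
      _ = u m n hmn z + u m (m + r') hmr'
            (u (m + r') (m + (r' + r'')) hr'R y - u (m + r') n hr'n z) := by rw [hw']
      _ = u m (m + (r' + r'')) (Nat.le_add_right _ _) y := by
            rw [map_sub, c4, c5]; abel
end

section
/- Let O be a valuation ring, let π ∈ O, and for i ∈ ℕ let F_i be the O[πt]-submodule of O[t] generated by 1, t, …, t^i. Then F_i consists exactly of those polynomials f(t) = Σ_j a_j t^j ∈ O[t] such that a_j ∈ π^{j-i}O for every j > i (with no condition on the coefficients a_j for j ≤ i beyond a_j ∈ O). -/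
/-- `F i` is the `O[πt]`-submodule of `O[t]` generated by `1, t, …, t^i`,
where `O[πt]` is the `O`-subalgebra of the polynomial ring `O[t]` generated by `πt`. -/
noncomputable def adicFiltration (O : Type*) [CommRing O] (π : O) (i : ℕ) :
    Submodule (Algebra.adjoin O {(Polynomial.C π * Polynomial.X : Polynomial O)})
      (Polynomial O) :=
  Submodule.span (Algebra.adjoin O {(Polynomial.C π * Polynomial.X : Polynomial O)})
    ((fun j => (Polynomial.X : Polynomial O) ^ j) '' Set.Iic i)

open Polynomial in
lemma adjoin_pi_t_coeff_dvd {O : Type*} [CommRing O] {π : O}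
    {p : Polynomial O} (hp : p ∈ Algebra.adjoin O {(C π * X : Polynomial O)}) :
    ∀ k, π ^ k ∣ p.coeff k := by
  induction hp using Algebra.adjoin_induction with
  | mem x hx =>
      rcases hx with rfl
      intro k
      rcases eq_or_ne k 1 with rfl | hk
      · simp
      · rw [coeff_C_mul, coeff_X, if_neg (Ne.symm hk), mul_zero]
        exact dvd_zero _
  | algebraMap a =>
      intro k
      rcases eq_or_ne k 0 with rfl | hk
      · simp
      · simp [Polynomial.algebraMap_eq, Polynomial.coeff_C, hk]
  | add x y _ _ hx hy =>
      intro k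
      simpa using dvd_add (hx k) (hy k)
  | mul x y _ _ hx hy =>
      intro k
      rw [coeff_mul]
      refine Finset.dvd_sum ?_
      rintro ⟨a, b⟩ hab
      have h : a + b = k := Finset.HasAntidiagonal.mem_antidiagonal.mp hab
      have := mul_dvd_mul (hx a) (hy b)
      rwa [← pow_add, h] at this

lemma subalgebra_smul_eq {O : Type*} [CommRing O] (S : Subalgebra O (Polynomial O))
    (s : S) (p : Polynomial O) : s • p = (s : Polynomial O) * p := by
  rw [Algebra.smul_def, S.algebraMap_eq]; rfl

open Polynomial in
/-- Let `O` be a valuation ring and `π ∈ O`. The `O[πt]`-submodule `F i` of `O[t]` generated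
by `1, t, …, t^i` consists exactly of those polynomials `f = Σ_j a_j t^j` such that
`a_j ∈ π^(j-i)O` for every `j > i`. -/
theorem mem_adicFiltration_iff_coeff_mem
    (O : Type*) [CommRing O] [IsDomain O] [ValuationRing O] (π : O) (i : ℕ)
    (f : Polynomial O) :
    f ∈ adicFiltration O π i ↔ ∀ j : ℕ, i < j → f.coeff j ∈ Ideal.span {π ^ (j - i)} := by
  simp only [Ideal.mem_span_singleton]
  constructor
  · intro hf
    induction hf using Submodule.span_induction with
    | mem x hx =>
        rcases hx with ⟨m, hm, rfl⟩
        have hm' : m ≤ i := hm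
        intro j hj
        rw [coeff_X_pow, if_neg (by omega : ¬ j = m)]
        exact dvd_zero _
    | zero => intro j hj; simp
    | add x y _ _ hx hy =>
        intro j hj
        simpa using dvd_add (hx j hj) (hy j hj)
    | smul r x _ hx =>
        intro j hj
        rw [subalgebra_smul_eq, coeff_mul]
        refine Finset.dvd_sum ?_
        rintro ⟨a, b⟩ hab
        have h : a + b = j := Finset.HasAntidiagonal.mem_antidiagonal.mp hab
        have hr := adjoin_pi_t_coeff_dvd r.2 a
        rcases le_or_gt b i with hb | hb
        · exact dvd_mul_of_dvd_left ((pow_dvd_pow π (by omega)).trans hr) _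
        · have := mul_dvd_mul hr (hx b hb)
          rw [← pow_add] at this
          exact (pow_dvd_pow π (by omega)).trans this
  · intro hf
    rw [f.as_sum_range]
    apply Submodule.sum_mem
    intro j _
    rcases le_or_gt j i with hj | hj
    · have hmem : (C (f.coeff j) : Polynomial O) ∈
          Algebra.adjoin O {(C π * X : Polynomial O)} := by
        simpa [Polynomial.algebraMap_eq] using
          Subalgebra.algebraMap_mem (Algebra.adjoin O {(C π * X : Polynomial O)}) (f.coeff j)
      have hX : (X : Polynomial O) ^ j ∈ adicFiltration O π i :=
        Submodule.subset_span ⟨j, hj, rfl⟩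
      have := Submodule.smul_mem (adicFiltration O π i)
        (⟨C (f.coeff j), hmem⟩ : Algebra.adjoin O {(C π * X : Polynomial O)}) hX
      have heq : (⟨C (f.coeff j), hmem⟩ : Algebra.adjoin O {(C π * X : Polynomial O)})
          • ((X : Polynomial O) ^ j) = monomial j (f.coeff j) := by
        rw [subalgebra_smul_eq, C_mul_X_pow_eq_monomial]
      rwa [heq] at this
    · obtain ⟨b, hb⟩ := hf j hj
      have hmem : (C b * (C π * X) ^ (j - i) : Polynomial O) ∈
          Algebra.adjoin O {(C π * X : Polynomial O)} := by
        have h1 : (C b : Polynomial O) ∈ Algebra.adjoin O {(C π * X : Polynomial O)} := by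
          simpa [Polynomial.algebraMap_eq] using
            Subalgebra.algebraMap_mem (Algebra.adjoin O {(C π * X : Polynomial O)}) b
        have h2 : ((C π * X : Polynomial O)) ∈ Algebra.adjoin O {(C π * X : Polynomial O)} :=
          Algebra.subset_adjoin rfl
        exact mul_mem h1 (pow_mem h2 _)
      have hX : (X : Polynomial O) ^ i ∈ adicFiltration O π i :=
        Submodule.subset_span ⟨i, Set.mem_Iic.mpr le_rfl, rfl⟩
      have := Submodule.smul_mem (adicFiltration O π i)
        (⟨C b * (C π * X) ^ (j - i), hmem⟩ :
          Algebra.adjoin O {(C π * X : Polynomial O)}) hX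
      have heq : (⟨C b * (C π * X) ^ (j - i), hmem⟩ :
          Algebra.adjoin O {(C π * X : Polynomial O)})
          • ((X : Polynomial O) ^ i) = monomial j (f.coeff j) := by
        rw [subalgebra_smul_eq]
        show (C b * (C π * X) ^ (j - i) : Polynomial O) * X ^ i = monomial j (f.coeff j)
        rw [hb, ← C_mul_X_pow_eq_monomial]
        calc (C b * (C π * X) ^ (j - i) : Polynomial O) * X ^ i
            = C (π ^ (j - i) * b) * X ^ (j - i + i) := by
              rw [mul_pow, ← C_pow, C_mul, pow_add]; ring
          _ = C (π ^ (j - i) * b) * X ^ j := by rw [Nat.sub_add_cancel hj.le]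
      rwa [heq] at this
end

section
/- Let O be a valuation ring, let π ∈ O be nonzero, and for i ∈ ℕ let F_i be the O[πt]-submodule of O[t] generated by 1, t, …, t^i. Then for every i ∈ ℕ one has F_{i+1} = (F_i : π) = { f ∈ O[t] : π·f ∈ F_i }. -/
open Polynomial

lemma pow_dvd_coeff_of_mem_adjoin {O : Type*} [CommRing O] {π : O} {p : O[X]}
    (hp : p ∈ Algebra.adjoin O {(C π * X : O[X])}) (n : ℕ) : π ^ n ∣ p.coeff n := by
  rw [Algebra.adjoin_singleton_eq_range_aeval] at hp
  obtain ⟨q, rfl⟩ := hp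
  induction q using Polynomial.induction_on' with
  | add p q hp hq => simp only [map_add, coeff_add]; exact dvd_add hp hq
  | monomial m a =>
    have : (Polynomial.aeval (C π * X) : O[X] →ₐ[O] O[X]) (monomial m a)
        = C (a * π ^ m) * X ^ m := by
      rw [Polynomial.aeval_monomial, mul_pow, ← C_pow, Polynomial.algebraMap_eq, map_mul]
      ring
    simp only [AlgHom.toRingHom_eq_coe, RingHom.coe_coe, this, coeff_C_mul, coeff_X_pow]
    split_ifs with h
    · subst h; exact ⟨a, by ring⟩
    · simp

lemma mul_mem_adicFiltration {O : Type*} [CommRing O] {π : O} {i : ℕ} {a f : O[X]}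
    (ha : a ∈ Algebra.adjoin O {(C π * X : O[X])}) (hf : f ∈ adicFiltration O π i) :
    a * f ∈ adicFiltration O π i := by
  have := Submodule.smul_mem (adicFiltration O π i) (⟨a, ha⟩ :
    Algebra.adjoin O {(C π * X : O[X])}) hf
  rwa [Algebra.smul_def] at this

lemma mem_adicFiltration_iff {O : Type*} [CommRing O] (π : O) (i : ℕ) (f : O[X]) :
    f ∈ adicFiltration O π i ↔ ∀ n, π ^ (n - i) ∣ f.coeff n := by
  constructor
  · intro hf
    induction hf using Submodule.span_induction with
    | mem x hx =>
      obtain ⟨j, hj, rfl⟩ := hx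
      intro n
      rw [coeff_X_pow]
      split_ifs with h
      · have hj' : j ≤ i := hj
        have : n - i = 0 := by omega
        simp [this]
      · simp
    | zero => simp
    | add x y _ _ hx hy => intro n; rw [coeff_add]; exact dvd_add (hx n) (hy n)
    | smul a x _ hx =>
      intro n
      rw [Algebra.smul_def]
      show π ^ (n - i) ∣ ((a : O[X]) * x).coeff n
      rw [coeff_mul]
      refine Finset.dvd_sum fun km hkm => ?_
      have hsum : km.1 + km.2 = n := Finset.HasAntidiagonal.mem_antidiagonal.mp hkm
      have h1 : π ^ km.1 ∣ (a : O[X]).coeff km.1 :=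
        pow_dvd_coeff_of_mem_adjoin a.2 km.1
      have h2 : π ^ (km.2 - i) ∣ x.coeff km.2 := hx km.2
      calc π ^ (n - i) ∣ π ^ (km.1 + (km.2 - i)) := pow_dvd_pow π (by omega)
        _ = π ^ km.1 * π ^ (km.2 - i) := pow_add π _ _
        _ ∣ _ := mul_dvd_mul h1 h2
  · intro h
    rw [← f.sum_C_mul_X_pow_eq]
    rw [Polynomial.sum_def]
    refine Submodule.sum_mem _ fun n _ => ?_
    have hX : ∀ j ≤ i, (X : O[X]) ^ j ∈ adicFiltration O π i := fun j hj =>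
      Submodule.subset_span ⟨j, hj, rfl⟩
    by_cases hn : n ≤ i
    · exact mul_mem_adicFiltration (by
        rw [← Polynomial.algebraMap_eq]; exact Subalgebra.algebraMap_mem _ _) (hX n hn)
    · obtain ⟨g, hg⟩ := h n
      have hni : n - i + i = n := Nat.sub_add_cancel (le_of_not_ge hn)
      have e1 : (C π * X : O[X]) ^ (n - i) = C (π ^ (n - i)) * X ^ (n - i) := by
        rw [mul_pow, ← C_pow]
      have e2 : (X : O[X]) ^ (n - i) * X ^ i = X ^ n := by rw [← pow_add, hni]
      have : (C g * (C π * X) ^ (n - i)) * X ^ i = C (f.coeff n) * X ^ n := by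
        calc (C g * (C π * X) ^ (n - i)) * X ^ i
            = C g * C (π ^ (n - i)) * (X ^ (n - i) * X ^ i) := by rw [e1]; ring
          _ = C (f.coeff n) * X ^ n := by rw [e2, ← C_mul, mul_comm g, ← hg]
      rw [← this]
      exact mul_mem_adicFiltration
        (mul_mem (by rw [← Polynomial.algebraMap_eq]; exact Subalgebra.algebraMap_mem _ _)
          (pow_mem (Algebra.self_mem_adjoin_singleton O _) _)) (hX i le_rfl)

set_option maxHeartbeats 1000000 in
/-- Let `O` be a valuation ring, `π ∈ O` nonzero, and `F i` the `O[πt]`-submodule of `O[t]`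
generated by `1, t, …, t^i`. Then `F (i+1) = (F i : π) = {f ∈ O[t] : π·f ∈ F i}`. -/
theorem adicFiltration_succ_eq_colon_pi
    (O : Type*) [CommRing O] [IsDomain O] [ValuationRing O] (π : O) (hπ : π ≠ 0) (i : ℕ) :
    ∀ f : Polynomial O, f ∈ adicFiltration O π (i + 1) ↔
      Polynomial.C π * f ∈ adicFiltration O π i := by
  intro f
  rw [mem_adicFiltration_iff π (i + 1) f, mem_adicFiltration_iff π i (Polynomial.C π * f)]
  constructor
  · intro h n
    rw [coeff_C_mul]
    by_cases hn : n ≤ i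
    · simp [Nat.sub_eq_zero_of_le hn]
    · obtain ⟨g, hg⟩ := h n
      refine ⟨g, ?_⟩
      rw [hg, show n - i = (n - (i + 1)) + 1 by omega, pow_succ]
      ring
  · intro h n
    by_cases hn : n ≤ i + 1
    · simp [Nat.sub_eq_zero_of_le hn]
    · have := h n
      rw [coeff_C_mul, show n - i = (n - (i + 1)) + 1 by omega, pow_succ, mul_comm _ π] at this
      exact (mul_dvd_mul_iff_left hπ).mp this
end

section
/- Let O be a valuation ring, let π ∈ O be nonzero, and for i ∈ ℕ let F_i be the O[πt]-submodule of O[t] generated by 1, t, …, t^i. Let ϖ ∈ O and n ∈ ℕ be such that πⁿ ∈ ϖO. Then for every i ∈ ℕ and every f ∈ F_i, one has f ∈ ϖ·O[t] if and only if f = ϖ·g for some g ∈ F_{i+n}; in other words, F_i ∩ ϖ·O[t] = F_i ∩ ϖ·F_{i+n}. -/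
open Polynomial

lemma adjoin_coeff_dvd (O : Type*) [CommRing O] (π : O)
    (a : Polynomial O) (ha : a ∈ Algebra.adjoin O {(C π * X : Polynomial O)}) (d : ℕ) :
    π ^ d ∣ a.coeff d := by
  induction ha using Algebra.adjoin_induction generalizing d with
  | mem x hx =>
      rcases hx with rfl
      rcases eq_or_ne d 1 with rfl | hd
      · simp only [Polynomial.coeff_C_mul, Polynomial.coeff_X_one, mul_one, pow_one]; exact dvd_refl π
      · rw [coeff_C_mul, coeff_X, if_neg (Ne.symm hd)]
        simp
  | algebraMap r =>
      rcases eq_or_ne d 0 with rfl | hd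
      · simp
      · rw [Polynomial.algebraMap_eq, coeff_C, if_neg hd]; exact dvd_zero _
  | add x y hx hy ihx ihy =>
      exact (Polynomial.coeff_add x y d) ▸ dvd_add (ihx d) (ihy d)
  | mul x y hx hy ihx ihy =>
      rw [coeff_mul]
      refine Finset.dvd_sum fun p hp => ?_
      rw [← (Finset.HasAntidiagonal.mem_antidiagonal.mp hp), pow_add]
      exact mul_dvd_mul (ihx p.1) (ihy p.2)

lemma mem_adicFiltration_coeff_dvd (O : Type*) [CommRing O] (π : O) (i : ℕ)
    (f : Polynomial O)
    (hf : f ∈ Submodule.span (Algebra.adjoin O {(C π * X : Polynomial O)})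
      ((fun j => (X : Polynomial O) ^ j) '' Set.Iic i)) (d : ℕ) :
    π ^ (d - i) ∣ f.coeff d := by
  induction hf using Submodule.span_induction generalizing d with
  | mem x hx =>
      rcases hx with ⟨j, hj, rfl⟩
      simp only [coeff_X_pow]
      split_ifs with h
      · subst h
        rw [Nat.sub_eq_zero_of_le hj]
        simp
      · exact dvd_zero _
  | zero => simp
  | add x y hx hy ihx ihy =>
      exact (Polynomial.coeff_add x y d) ▸ dvd_add (ihx d) (ihy d)
  | smul a x hx ihx =>
      rw [Subalgebra.smul_def, smul_eq_mul]
      rw [coeff_mul]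
      refine Finset.dvd_sum fun p hp => ?_
      have hkl := Finset.HasAntidiagonal.mem_antidiagonal.mp hp
      have h1 : π ^ p.1 ∣ (a : Polynomial O).coeff p.1 := adjoin_coeff_dvd O π _ a.2 _
      have h2 : π ^ (p.2 - i) ∣ x.coeff p.2 := ihx _
      calc π ^ (d - i) ∣ π ^ (p.1 + (p.2 - i)) := pow_dvd_pow _ (by omega)
        _ ∣ _ := by rw [pow_add]; exact mul_dvd_mul h1 h2

lemma coeff_dvd_mem_adicFiltration (O : Type*) [CommRing O] (π : O) (i : ℕ)
    (f : Polynomial O) (hf : ∀ d, π ^ (d - i) ∣ f.coeff d) :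
    f ∈ Submodule.span (Algebra.adjoin O {(C π * X : Polynomial O)})
      ((fun j => (X : Polynomial O) ^ j) '' Set.Iic i) := by
  rw [f.as_sum_support]
  refine Submodule.sum_mem _ fun d _ => ?_
  rcases le_or_gt d i with hd | hd
  · have haX : (C (f.coeff d) : Polynomial O) ∈ Algebra.adjoin O {(C π * X : Polynomial O)} := by
      exact Subalgebra.algebraMap_mem _ (f.coeff d)
    have := Submodule.smul_mem
      (Submodule.span (Algebra.adjoin O {(C π * X : Polynomial O)})
        ((fun j => (X : Polynomial O) ^ j) '' Set.Iic i))
      (⟨C (f.coeff d), haX⟩ : Algebra.adjoin O {(C π * X : Polynomial O)})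
      (Submodule.subset_span ⟨d, hd, rfl⟩)
    rw [Subalgebra.smul_def, smul_eq_mul, C_mul_X_pow_eq_monomial] at this
    exact this
  · obtain ⟨c, hc⟩ := hf d
    have haX : (C c * (C π * X) ^ (d - i) : Polynomial O) ∈
        Algebra.adjoin O {(C π * X : Polynomial O)} :=
      Subalgebra.mul_mem _ (Subalgebra.algebraMap_mem _ c)
        (Subalgebra.pow_mem _ (Algebra.subset_adjoin (Set.mem_singleton _)) _)
    have := Submodule.smul_mem
      (Submodule.span (Algebra.adjoin O {(C π * X : Polynomial O)})
        ((fun j => (X : Polynomial O) ^ j) '' Set.Iic i))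
      (⟨_, haX⟩ : Algebra.adjoin O {(C π * X : Polynomial O)})
      (Submodule.subset_span ⟨i, le_refl i, rfl⟩)
    have heq : (C c * (C π * X) ^ (d - i) : Polynomial O) * X ^ i
        = Polynomial.monomial d (f.coeff d) := by
      calc (C c * (C π * X) ^ (d - i) : Polynomial O) * X ^ i
          = C (π ^ (d - i) * c) * X ^ (d - i + i) := by
            rw [mul_pow, ← C_pow, pow_add, map_mul]; ring
        _ = Polynomial.monomial d (f.coeff d) := by
            rw [← hc, Nat.sub_add_cancel hd.le, C_mul_X_pow_eq_monomial]
    rw [Subalgebra.smul_def, smul_eq_mul, heq] at this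
    exact this

/-- Let `O` be a valuation ring, `π ∈ O` nonzero, `ϖ ∈ O` and `n ∈ ℕ` with `πⁿ ∈ ϖO`.
Then for every `i` and every `f ∈ F i`, `f` is divisible by `ϖ` in `O[t]` if and only if
`f = ϖ·g` for some `g ∈ F (i+n)`; i.e. `F i ∩ ϖ·O[t] = F i ∩ ϖ·F (i+n)`. -/
theorem adicFiltration_inter_dvd
    (O : Type*) [CommRing O] [IsDomain O] [ValuationRing O] (π : O) (hπ : π ≠ 0)
    (ϖ : O) (n : ℕ) (hn : ϖ ∣ π ^ n) (i : ℕ) (f : Polynomial O)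
    (hf : f ∈ adicFiltration O π i) :
    (∃ g : Polynomial O, f = Polynomial.C ϖ * g) ↔
      (∃ g ∈ adicFiltration O π (i + n), f = Polynomial.C ϖ * g) := by
  constructor
  · rintro ⟨g, rfl⟩
    refine ⟨g, ?_, rfl⟩
    obtain ⟨c, hc⟩ := hn
    apply coeff_dvd_mem_adicFiltration
    intro d
    rcases le_or_gt d (i + n) with hd | hd
    · rw [Nat.sub_eq_zero_of_le hd]; simp
    · have h1 : π ^ (d - i) ∣ ϖ * g.coeff d := by
        have := mem_adicFiltration_coeff_dvd O π i _ hf d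
        rwa [coeff_C_mul] at this
      have h2 : π ^ (d - i) ∣ π ^ n * g.coeff d := by
        obtain ⟨u, hu⟩ := h1
        exact ⟨c * u, by rw [hc, mul_comm ϖ c, mul_assoc, hu]; ring⟩
      have hsplit : π ^ (d - i) = π ^ n * π ^ (d - (i + n)) := by
        rw [← pow_add]; congr 1; omega
      rw [hsplit] at h2
      exact (mul_dvd_mul_iff_left (pow_ne_zero n hπ)).mp h2
  · rintro ⟨g, _, rfl⟩
    exact ⟨g, rfl⟩
end

section
/- Let A be a commutative ring, π ∈ A, and M an A-module. Let {R_n}_{n ≥ 0} be a decreasing sequence of submodules of M such that π^{n+1}M ⊆ R_n for all n, π·R_n ⊆ R_{n+1} for all n, and there exists n₀ ∈ ℕ with R_{n+1} = π·R_n for all n ≥ n₀. Then the canonical map lim_n M/π^{n+1}M → lim_n M/R_n, induced by the inclusions π^{n+1}M ⊆ R_n, is an isomorphism. -/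
open Pointwise

/-- The inverse limit `lim_n M/S n` of the quotients of `M` by a decreasing sequence of
submodules `S n`, realized as the submodule of compatible sequences in `∏ n, M ⧸ S n`,
the transition maps being the canonical projections. -/
def invLimQuot {A : Type*} [CommRing A] {M : Type*} [AddCommGroup M] [Module A M]
    (S : ℕ → Submodule A M) (hS : ∀ m n : ℕ, m ≤ n → S n ≤ S m) :
    Submodule A (∀ n, M ⧸ S n) where
  carrier := {x | ∀ m n (h : m ≤ n),
    Submodule.mapQ (S n) (S m) LinearMap.id (fun _ hz => hS m n h hz) (x n) = x m}
  add_mem' {a b} ha hb := by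
    intro m n h
    simp only [Pi.add_apply, map_add, ha m n h, hb m n h]
  zero_mem' := by
    intro m n h
    simp only [Pi.zero_apply, map_zero]
  smul_mem' c a ha := by
    intro m n h
    simp only [Pi.smul_apply, map_smul, ha m n h]

/-- The canonical map `lim_n M/S n → lim_n M/R n` induced by termwise inclusions
`S n ≤ R n` of two decreasing sequences of submodules. -/
def invLimQuotMap {A : Type*} [CommRing A] {M : Type*} [AddCommGroup M] [Module A M]
    (S R : ℕ → Submodule A M) (hS : ∀ m n : ℕ, m ≤ n → S n ≤ S m)
    (hR : ∀ m n : ℕ, m ≤ n → R n ≤ R m) (hSR : ∀ n, S n ≤ R n) :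
    invLimQuot S hS →ₗ[A] invLimQuot R hR where
  toFun x := ⟨fun n => Submodule.mapQ (S n) (R n) LinearMap.id (fun _ hz => hSR n hz) (x.1 n), by
    intro m n h
    obtain ⟨y, hy⟩ := Submodule.Quotient.mk_surjective (S n) (x.1 n)
    have hx := x.2 m n h
    simp only [← hy, ← hx, Submodule.mapQ_apply, LinearMap.id_apply]⟩
  map_add' x y := by
    apply Subtype.ext
    funext n
    simp only [Submodule.coe_add, Pi.add_apply, map_add]
  map_smul' c x := by
    apply Subtype.ext
    funext n
    simp only [Submodule.coe_smul, Pi.smul_apply, map_smul, RingHom.id_apply]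

theorem canonical_map_pi_adic_lim_to_good_filtration_lim_bijective
    {A : Type*} [CommRing A] {M : Type*} [AddCommGroup M] [Module A M] (π : A)
    (R : ℕ → Submodule A M)
    (hdec : ∀ m n : ℕ, m ≤ n → R n ≤ R m)
    (h1 : ∀ n : ℕ, (π ^ (n + 1)) • (⊤ : Submodule A M) ≤ R n)
    (h2 : ∀ n : ℕ, π • R n ≤ R (n + 1))
    (h3 : ∃ n₀ : ℕ, ∀ n ≥ n₀, R (n + 1) = π • R n) :
    Function.Bijective
      (invLimQuotMap (fun n => (π ^ (n + 1)) • (⊤ : Submodule A M)) R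
        (by
          intro m n h x hx
          obtain ⟨y, -, rfl⟩ := hx
          refine ⟨π ^ (n - m) • y, trivial, ?_⟩
          show π ^ (m + 1) • π ^ (n - m) • y = π ^ (n + 1) • y
          rw [smul_smul, ← pow_add]
          congr 2
          omega)
        hdec h1) := by
  obtain ⟨n₀, h3⟩ := h3
  have key : ∀ k, R (n₀ + k) ≤ (π ^ k) • (⊤ : Submodule A M) := by
    intro k
    induction k with
    | zero => rw [pow_zero, one_smul]; exact le_top
    | succ k ih =>
      have heq : R (n₀ + (k + 1)) = π • R (n₀ + k) := by
        rw [show n₀ + (k + 1) = (n₀ + k) + 1 by ring]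
        exact h3 (n₀ + k) (by omega)
      rw [heq]
      intro x hx
      obtain ⟨z, hz, rfl⟩ := hx
      obtain ⟨w, -, rfl⟩ := ih hz
      refine ⟨w, trivial, ?_⟩
      show π ^ (k + 1) • w = π • π ^ k • w
      rw [smul_smul, pow_succ']
  have hRS : ∀ n, R (n + (n₀ + 1)) ≤ (π ^ (n + 1)) • (⊤ : Submodule A M) := by
    intro n
    have := key (n + 1)
    rwa [show n₀ + (n + 1) = n + (n₀ + 1) by ring] at this
  set c := n₀ + 1
  constructor
  · rw [injective_iff_map_eq_zero]
    intro x hx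
    apply Subtype.ext
    funext n
    obtain ⟨y, hy⟩ := Submodule.Quotient.mk_surjective _ (x.1 (n + c))
    have h0 : (Submodule.Quotient.mk y : M ⧸ R (n + c)) = 0 := by
      have h := congrArg (fun v => v.1 (n + c)) hx
      have h' : Submodule.mapQ ((π ^ (n + c + 1)) • (⊤ : Submodule A M)) (R (n + c))
          LinearMap.id (fun _ hz => h1 (n + c) hz) (x.1 (n + c)) = 0 := h
      rw [← hy, Submodule.mapQ_apply, LinearMap.id_apply] at h'
      exact h' 
    have hyR : y ∈ R (n + c) := (Submodule.Quotient.mk_eq_zero _).mp h0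
    have hxn : x.1 n = Submodule.Quotient.mk y := by
      have := x.2 n (n + c) (by omega)
      rw [← hy, Submodule.mapQ_apply, LinearMap.id_apply] at this
      exact this.symm
    rw [hxn]
    show _ = (0 : M ⧸ (π ^ (n + 1)) • (⊤ : Submodule A M))
    rw [Submodule.Quotient.mk_eq_zero]
    exact hRS n hyR
  · intro x
    choose y hy using fun n => Submodule.Quotient.mk_surjective (R n) (x.1 n)
    have hcomp : ∀ m n, m ≤ n → y n - y m ∈ R m := by
      intro m n h
      rw [← Submodule.Quotient.eq]
      have := x.2 m n h
      rw [← hy n, Submodule.mapQ_apply, LinearMap.id_apply] at this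
      rw [this, hy m]
    refine ⟨⟨fun n => Submodule.Quotient.mk (y (n + c)), ?_⟩, ?_⟩
    · intro m n h
      rw [Submodule.mapQ_apply, LinearMap.id_apply, Submodule.Quotient.eq]
      exact hRS m (hcomp (m + c) (n + c) (by omega))
    · apply Subtype.ext
      funext n
      show Submodule.mapQ _ _ LinearMap.id _ (Submodule.Quotient.mk (y (n + c))) = x.1 n
      rw [Submodule.mapQ_apply, LinearMap.id_apply, ← hy n, Submodule.Quotient.eq]
      exact hcomp n (n + c) (by omega)
end
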